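/- The system of equations x₀ + 2x₁ = 1 and x₀³ + 2x₁³ = 0 over the reals has the unique solution x₀ = -2^{1/3}/(2 - 2^{1/3}), x₁ = 1/(2 - 2^{1/3}). -/
import Mathlib


/-- The system `x₀ + 2x₁ = 1`, `x₀³ + 2x₁³ = 0` over the reals has the unique solution
`x₀ = -2^(1/3)/(2 - 2^(1/3))`, `x₁ = 1/(2 - 2^(1/3))`. -/
theorem yoshida_order_conditions_unique_solution (x₀ x₁ : ℝ) :
    (x₀ + 2 * x₁ = 1 ∧ x₀ ^ 3 + 2 * x₁ ^ 3 = 0) ↔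
      (x₀ = -(2 : ℝ) ^ ((1 : ℝ) / 3) / (2 - (2 : ℝ) ^ ((1 : ℝ) / 3)) ∧
        x₁ = 1 / (2 - (2 : ℝ) ^ ((1 : ℝ) / 3))) := by
  set c : ℝ := (2 : ℝ) ^ ((1 : ℝ) / 3) with hc
  have hc3 : c ^ 3 = 2 := by
    rw [hc, ← Real.rpow_natCast ((2:ℝ) ^ ((1:ℝ)/3)) 3, ← Real.rpow_mul (by norm_num)]
    norm_num
  have hclt : c < 2 := by
    have : c < 2 ^ (1 : ℝ) := by
      apply Real.rpow_lt_rpow_left_iff (x := (2:ℝ)) (by norm_num) |>.mpr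
      norm_num
    simpa using this
  have hne : (2 : ℝ) - c ≠ 0 := by linarith
  constructor
  · rintro ⟨h1, h2⟩
    have key : x₀ = -c * x₁ := by
      have h3 : x₀ ^ 3 = (-c * x₁) ^ 3 := by
        have : (-c * x₁) ^ 3 = -(c ^ 3) * x₁ ^ 3 := by ring
        rw [this, hc3]; linarith
      exact ((Odd.strictMono_pow (R := ℝ) (by decide)).injective h3)
    have hx1 : x₁ = 1 / (2 - c) := by
      field_simp
      rw [key] at h1; linarith
    refine ⟨?_, hx1⟩
    rw [key, hx1]; field_simp
  · rintro ⟨h1, h2⟩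
    subst h1 h2
    constructor
    · field_simp; ring
    · field_simp; linarith [hc3]
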